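/- Let K ≥ 1, σ > 0, μ ∈ ℝ, and μ_1, …, μ_K ∈ ℝ. For a deterministic nonempty selection A ⊆ {1,…,K}, define the negative gain L(A) = σ²/|A| + ((1/|A|)·∑_{m∈A} μ_m - μ)². Let A* minimize L over all subsets of fixed size n = ⌈ρK⌉ (1 ≤ n ≤ K), and let A be any subset of size n. Then L(A)/L(A*) ≤ 1 + (n/σ²)·max_{m∈[K]} (μ_m - μ)². In particular, if σ²/(K·max_m (μ_m - μ)²) → ∞ as K → ∞ (with n ≤ K), then L(A)/L(A*) → 1, i.e., any selection of size n is asymptotically optimal. -/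
import Mathlib


/-- Deterministic version of Proposition 3: with
`L(A) = σ²/|A| + ((∑_{m∈A} μ_m)/|A| - μ)²`, if `A*` minimizes `L` over
subsets of size `n` and `A` is any subset of size `n`, then
`L(A)/L(A*) ≤ 1 + (n/σ²)·max_m (μ_m - μ)²`. -/
theorem any_selection_near_optimal
    (K : ℕ) (hK : 1 ≤ K) (σ : ℝ) (hσ : 0 < σ) (μ0 : ℝ) (μ : Fin K → ℝ)
    (n : ℕ) (hn1 : 1 ≤ n) (hnK : n ≤ K)
    (L : Finset (Fin K) → ℝ)
    (hL : ∀ S : Finset (Fin K), S.Nonempty →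
      L S = σ ^ 2 / S.card + ((∑ m ∈ S, μ m) / S.card - μ0) ^ 2)
    (Astar A : Finset (Fin K)) (hAstar : Astar.card = n) (hA : A.card = n)
    (hmin : ∀ S : Finset (Fin K), S.card = n → L Astar ≤ L S) :
    L A / L Astar ≤
      1 + (n / σ ^ 2) *
        Finset.univ.sup' ⟨⟨0, hK⟩, Finset.mem_univ _⟩ (fun m : Fin K => (μ m - μ0) ^ 2) := by
  set M := Finset.univ.sup' ⟨⟨0, hK⟩, Finset.mem_univ _⟩
      (fun m : Fin K => (μ m - μ0) ^ 2) with hM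
  have hbound : ∀ m : Fin K, (μ m - μ0) ^ 2 ≤ M := fun m => by
    rw [hM]
    exact Finset.le_sup' (fun m : Fin K => (μ m - μ0) ^ 2) (Finset.mem_univ m)
  have hMnn : 0 ≤ M := le_trans (sq_nonneg _) (hbound ⟨0, hK⟩)
  have hn0 : (0 : ℝ) < n := by exact_mod_cast hn1
  have hAne : A.Nonempty := Finset.card_pos.mp (by omega : 0 < A.card)
  have hAstarne : Astar.Nonempty := Finset.card_pos.mp (by omega : 0 < Astar.card)
  have hσ2 : (0 : ℝ) < σ ^ 2 := by positivity
  -- bias bound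
  have habs : ∀ m : Fin K, |μ m - μ0| ≤ Real.sqrt M := fun m => by
    have := hbound m
    nlinarith [Real.sq_sqrt hMnn, Real.sqrt_nonneg M, abs_nonneg (μ m - μ0),
      sq_abs (μ m - μ0)]
  have hsum : |(∑ m ∈ A, μ m) / (A.card : ℝ) - μ0| ≤ Real.sqrt M := by
    have h1 : (∑ m ∈ A, μ m) / (A.card : ℝ) - μ0
        = (∑ m ∈ A, (μ m - μ0)) / (A.card : ℝ) := by
      rw [Finset.sum_sub_distrib, Finset.sum_const, nsmul_eq_mul]
      field_simp [hA]
    rw [h1, abs_div, abs_of_nonneg (by positivity : (0:ℝ) ≤ (A.card : ℝ))]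
    rw [div_le_iff₀ (by rw [hA]; exact hn0)]
    calc |∑ m ∈ A, (μ m - μ0)| ≤ ∑ m ∈ A, |μ m - μ0| := Finset.abs_sum_le_sum_abs _ _
      _ ≤ ∑ _m ∈ A, Real.sqrt M := Finset.sum_le_sum fun m _ => habs m
      _ = Real.sqrt M * A.card := by rw [Finset.sum_const, nsmul_eq_mul]; ring
  have hbias : ((∑ m ∈ A, μ m) / (A.card : ℝ) - μ0) ^ 2 ≤ M := by
    have := sq_le_sq' (neg_le_of_abs_le hsum) (le_of_abs_le hsum)
    rwa [Real.sq_sqrt hMnn] at this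
  rw [hA] at hbias
  have hLA : L A ≤ σ ^ 2 / n + M := by
    rw [hL A hAne, hA]
    linarith
  have hLAstar : σ ^ 2 / n ≤ L Astar := by
    rw [hL Astar hAstarne, hAstar]
    nlinarith [sq_nonneg ((∑ m ∈ Astar, μ m) / (n : ℝ) - μ0)]
  have hLAstarpos : 0 < L Astar := lt_of_lt_of_le (by positivity) hLAstar
  rw [div_le_iff₀ hLAstarpos]
  have hfac : (0:ℝ) ≤ 1 + (n / σ ^ 2) * M := by positivity
  calc L A ≤ σ ^ 2 / n + M := hLA
    _ = (1 + (n / σ ^ 2) * M) * (σ ^ 2 / n) := by field_simp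
    _ ≤ (1 + (n / σ ^ 2) * M) * L Astar := by
        exact mul_le_mul_of_nonneg_left hLAstar hfac
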